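/- If K is diametrically complete with respect to C (every proper superset of K has strictly larger diameter with respect to C), then R(K,C)/r(K,C) ≤ s(K)·s(C). -/

import Mathlib

open Pointwise

/-- A convex body: compact, convex, with nonempty interior. -/
def IsBody {n : ℕ} (K : Set (Fin n → ℝ)) : Prop :=
  Convex ℝ K ∧ IsCompact K ∧ (interior K).Nonempty

/-- Circumradius of `K` w.r.t. `C`: smallest `ρ > 0` with `K` contained in a translate of `ρ • C`. -/
noncomputable def circR {n : ℕ} (K C : Set (Fin n → ℝ)) : ℝ :=
  sInf {ρ : ℝ | 0 < ρ ∧ ∃ t : Fin n → ℝ, K ⊆ t +ᵥ ρ • C}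

/-- Inradius of `K` w.r.t. `C`: largest `ρ ≥ 0` with a translate of `ρ • C` inside `K`. -/
noncomputable def inrad {n : ℕ} (K C : Set (Fin n → ℝ)) : ℝ :=
  sSup {ρ : ℝ | 0 ≤ ρ ∧ ∃ t : Fin n → ℝ, t +ᵥ ρ • C ⊆ K}

/-- Minkowski asymmetry `s(K) = R(-K, K)`. -/
noncomputable def asym {n : ℕ} (K : Set (Fin n → ℝ)) : ℝ := circR (-K) K

/-- Diameter of `K` w.r.t. `C`: twice the maximal circumradius of a segment with endpoints in `K`. -/
noncomputable def diamC {n : ℕ} (K C : Set (Fin n → ℝ)) : ℝ :=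
  sSup {d : ℝ | ∃ x ∈ K, ∃ y ∈ K, d = 2 * circR (segment ℝ x y) C}

/-- `K` is (diametrically) complete w.r.t. `C`. -/
def IsDiamComplete {n : ℕ} (K C : Set (Fin n → ℝ)) : Prop :=
  ∀ K' : Set (Fin n → ℝ), IsBody K' → K ⊂ K' → diamC K C < diamC K' C

/-- `S` is an `n`-simplex: convex hull of `n+1` affinely independent points. -/
def IsSimplexBody {n : ℕ} (S : Set (Fin n → ℝ)) : Prop :=
  ∃ p : Fin (n + 1) → (Fin n → ℝ), AffineIndependent ℝ p ∧ S = convexHull ℝ (Set.range p)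

/-- Support function of `C`. -/
noncomputable def supp {n : ℕ} (C : Set (Fin n → ℝ)) (a : Fin n → ℝ) : ℝ :=
  sSup {r : ℝ | ∃ x ∈ C, r = dotProduct a x}

/-- `A ⊆ₜ B`: `A` is contained in some translate of `B`. -/
def SubsetT {n : ℕ} (A B : Set (Fin n → ℝ)) : Prop := ∃ t : Fin n → ℝ, A ⊆ t +ᵥ B

/-!
Put `B = C - C`. The diameter of `K` with respect to `C` is measured by the gauge of `B`, and
completeness makes `K` the intersection of the gauge balls of radius `D/2` centred at its points.
Hence every circumscribed translate `c + ρB` of `K` gives an inscribed translate `c + (D/2 - ρ)B`,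
so `D/2 ≤ R(K,B) + r(K,B)`; with `R(K,B) ≤ R(K,K-K) R(K-K,B) ≤ s(K)/(1+s(K)) · D/2` this yields
`R(K,B) ≤ s(K) r(K,B)`. Passing from `B` back to `C` costs `R(B,C) ≤ 1 + s(C)` and
`R(C,B) ≤ s(C)/(1+s(C))`, through `R(K,C) ≤ R(K,B) R(B,C)` and `r(K,B) ≤ r(K,C) R(C,B)`.
-/

open Set Topology Bornology

lemma le_of_forall_gt_of_continuousWithinAt {f : ℝ → ℝ} {x a : ℝ}
    (hf : ContinuousWithinAt f (Ioi a) a) (h : ∀ b > a, x ≤ f b) : x ≤ f a :=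
  ge_of_tendsto hf (eventually_nhdsWithin_of_forall h)

section TopologicalVectorSpace

variable {E : Type*} [AddCommGroup E] [TopologicalSpace E] [IsTopologicalAddGroup E]

lemma sub_mem_nhds_zero_of_mem_interior {C D : Set E} {c : E} (hc : c ∈ interior C)
    (hcD : c ∈ D) : C - D ∈ 𝓝 0 :=
  mem_interior_iff_mem_nhds.1 (subset_interior_sub_left ⟨c, hc, c, hcD, sub_self c⟩)

lemma mem_smul_of_gauge_le [Module ℝ E] [ContinuousSMul ℝ E] {B : Set E} (hB : Convex ℝ B)
    (hBc : IsClosed B) (hB0 : B ∈ 𝓝 0) {a : ℝ} (ha : 0 < a) {x : E} (h : gauge B x ≤ a) : x ∈ a • B := by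
  rw [mem_smul_set_iff_inv_smul_mem₀ ha.ne', ← hBc.closure_eq,
    ← gauge_le_one_iff_mem_closure hB hB0, gauge_smul_of_nonneg (inv_nonneg.2 ha.le), smul_eq_mul,
    inv_mul_le_one₀ ha]
  exact h

end TopologicalVectorSpace

section AddGroup

variable {α : Type*} [AddGroup α]

lemma vadd_set_eq_singleton_add (t : α) (S : Set α) : t +ᵥ S = {t} + S := by
  rw [singleton_add]
  exact image_vadd.symm

lemma Set.Nontrivial.sub_self {C : Set α} (hC : C.Nontrivial) : (C - C).Nontrivial := by
  obtain ⟨x, hx, y, hy, hxy⟩ := hC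
  exact ⟨x - y, sub_mem_sub hx hy, 0, ⟨x, hx, x, hx, _root_.sub_self x⟩, sub_ne_zero.2 hxy⟩

lemma neg_mem_sub_self {C : Set α} {v : α} (hv : v ∈ C - C) : -v ∈ C - C := by
  rwa [← neg_sub C C, Set.neg_mem_neg]

end AddGroup

variable {n : ℕ}

namespace IsBody

variable {A B : Set (Fin n → ℝ)}

lemma nonempty (hA : IsBody A) : A.Nonempty := hA.2.2.mono interior_subset

lemma isBounded (hA : IsBody A) : IsBounded A := hA.2.1.isBounded

lemma sub (hA : IsBody A) (hB : IsBody B) : IsBody (A - B) := by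
  obtain ⟨a, ha⟩ := hA.2.2
  obtain ⟨b, hb⟩ := hB.nonempty
  refine ⟨hA.1.sub hB.1, ?_, a - b, subset_interior_sub_left (sub_mem_sub ha hb)⟩
  rw [sub_eq_add_neg]
  exact hA.2.1.add hB.2.1.neg

lemma sub_self_mem_nhds_zero (hA : IsBody A) : A - A ∈ 𝓝 0 := by
  obtain ⟨a, ha⟩ := hA.2.2
  exact sub_mem_nhds_zero_of_mem_interior ha (interior_subset ha)

end IsBody

namespace SubsetT

variable {A A' B B' C : Set (Fin n → ℝ)}

lemma of_subset (h : A ⊆ B) : SubsetT A B := ⟨0, by rwa [zero_vadd]⟩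

lemma trans (hAB : SubsetT A B) (hBC : SubsetT B C) : SubsetT A C := by
  obtain ⟨t, ht⟩ := hAB
  obtain ⟨u, hu⟩ := hBC
  exact ⟨t + u, ht.trans (by rw [← vadd_vadd]; exact vadd_set_mono hu)⟩

lemma smul (h : SubsetT A B) (c : ℝ) : SubsetT (c • A) (c • B) := by
  obtain ⟨t, ht⟩ := h
  refine ⟨c • t, (smul_set_mono ht).trans_eq ?_⟩
  rw [vadd_set_eq_singleton_add, vadd_set_eq_singleton_add, smul_add, smul_set_singleton]

lemma add (h : SubsetT A B) (h' : SubsetT A' B') : SubsetT (A + A') (B + B') := by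
  obtain ⟨t, ht⟩ := h
  obtain ⟨u, hu⟩ := h'
  refine ⟨t + u, (add_subset_add ht hu).trans_eq ?_⟩
  rw [vadd_set_eq_singleton_add, vadd_set_eq_singleton_add, vadd_set_eq_singleton_add,
    add_add_add_comm, singleton_add_singleton]

lemma neg (h : SubsetT A B) : SubsetT (-A) (-B) := by
  obtain ⟨t, ht⟩ := h
  refine ⟨-t, (neg_subset_neg.2 ht).trans_eq ?_⟩
  rw [vadd_set_eq_singleton_add, vadd_set_eq_singleton_add, neg_add, neg_singleton]

lemma smul_of_le (hC : Convex ℝ C) (hne : C.Nonempty) {ρ ρ' : ℝ} (hρ : 0 ≤ ρ) (h : ρ ≤ ρ') :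
    SubsetT (ρ • C) (ρ' • C) := by
  obtain ⟨c, hc⟩ := hne.smul_set (a := ρ' - ρ)
  have h0 : SubsetT 0 ((ρ' - ρ) • C) := ⟨-c, zero_subset.2 (by
    rwa [mem_vadd_set_iff_neg_vadd_mem, neg_neg, vadd_eq_add, add_zero])⟩
  have := (of_subset (subset_refl (ρ • C))).add h0
  rwa [add_zero, ← hC.add_smul hρ (sub_nonneg.2 h), add_sub_cancel] at this

end SubsetT

section Radii

variable {A B C K : Set (Fin n → ℝ)} {ρ : ℝ}

lemma circR_nonneg (A C : Set (Fin n → ℝ)) : 0 ≤ circR A C :=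
  Real.sInf_nonneg fun _ h ↦ h.1.le

lemma circR_le (hρ : 0 < ρ) (h : SubsetT A (ρ • C)) : circR A C ≤ ρ :=
  csInf_le ⟨0, fun _ h ↦ h.1.le⟩ ⟨hρ, h⟩

lemma exists_subsetT_smul (hA : IsBounded A) (hC : (interior C).Nonempty) :
    ∃ ρ : ℝ, 0 < ρ ∧ SubsetT A (ρ • C) := by
  obtain ⟨c, hc⟩ := hC
  obtain ⟨ρ, hρ, hρA⟩ := ((NormedSpace.isVonNBounded_iff ℝ).2 hA
    (sub_mem_nhds_zero_of_mem_interior hc (mem_singleton c))).exists_pos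
  have hshift : SubsetT (C - {c}) C :=
    ⟨-c, by rw [sub_eq_add_neg, neg_singleton, add_comm, vadd_set_eq_singleton_add]⟩
  exact ⟨ρ, hρ, (SubsetT.of_subset (hρA ρ (Real.norm_of_nonneg hρ.le).ge)).trans (hshift.smul ρ)⟩

lemma subsetT_smul_of_circR_lt (hA : IsBounded A) (hC : IsBody C) (h : circR A C < ρ) :
    SubsetT A (ρ • C) := by
  obtain ⟨ρ₀, hρ₀, h₀⟩ := exists_subsetT_smul hA hC.2.2
  obtain ⟨ρ₁, ⟨hρ₁, h₁⟩, hlt⟩ := exists_lt_of_csInf_lt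
    (show {ρ : ℝ | 0 < ρ ∧ SubsetT A (ρ • C)}.Nonempty from ⟨ρ₀, hρ₀, h₀⟩) h
  exact h₁.trans (SubsetT.smul_of_le hC.1 hC.nonempty hρ₁.le hlt.le)

lemma circR_le_mul_circR (hA : IsBounded A) (hB : IsBody B) (hC : IsBody C) :
    circR A C ≤ circR A B * circR B C := by
  refine le_of_forall_gt_of_continuousWithinAt (f := (· * circR B C)) (by fun_prop)
    fun ρ hρ ↦ le_of_forall_gt_of_continuousWithinAt (f := (ρ * ·)) (by fun_prop) fun σ hσ ↦ ?_
  have hρ0 := (circR_nonneg A B).trans_lt hρ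
  have hσ0 := (circR_nonneg B C).trans_lt hσ
  have := (subsetT_smul_of_circR_lt hB.isBounded hC hσ).smul ρ
  rw [smul_smul] at this
  exact circR_le (mul_pos hρ0 hσ0) ((subsetT_smul_of_circR_lt hA hB hρ).trans this)

lemma circR_sub_self_le (hC : IsBody C) : circR (C - C) C ≤ 1 + asym C := by
  refine le_of_forall_gt_of_continuousWithinAt (f := (1 + ·)) (by fun_prop) fun σ hσ ↦ ?_
  have hσ0 := (circR_nonneg _ _).trans_lt hσ
  have := (SubsetT.of_subset (subset_refl C)).add
    (subsetT_smul_of_circR_lt hC.isBounded.neg hC hσ)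
  rw [← sub_eq_add_neg] at this
  refine circR_le (by linarith) ?_
  rwa [hC.1.add_smul zero_le_one hσ0.le, one_smul]

lemma circR_le_sub_self (hC : IsBody C) : circR C (C - C) ≤ asym C / (1 + asym C) := by
  have hs := circR_nonneg (-C) C
  refine le_of_forall_gt_of_continuousWithinAt (f := fun σ ↦ σ / (1 + σ))
    (continuousAt_id.div (continuousAt_const.add continuousAt_id)
      (by change 1 + asym C ≠ 0; positivity)).continuousWithinAt fun σ hσ ↦ ?_
  have hσ0 : 0 < σ := hs.trans_lt hσ
  set μ := σ / (1 + σ)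
  have hμ : μ + μ / σ = 1 := by simp only [μ]; field_simp; ring
  -- `C = μ • C + (μ / σ) • C ⊆ₜ μ • C + μ • -C = μ • (C - C)`
  have hneg := ((subsetT_smul_of_circR_lt hC.isBounded.neg hC hσ).neg).smul (μ / σ)
  rw [neg_neg, ← smul_set_neg, smul_smul, div_mul_cancel₀ _ hσ0.ne'] at hneg
  have := (SubsetT.of_subset (subset_refl (μ • C))).add hneg
  rw [← hC.1.add_smul (by positivity) (by positivity), hμ, one_smul, ← smul_add,
    ← sub_eq_add_neg] at this
  exact circR_le (by positivity) this

lemma inrad_nonneg : 0 ≤ inrad K C := Real.sSup_nonneg fun _ h ↦ h.1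

lemma inrad_le {a : ℝ} (ha : 0 ≤ a) (h : ∀ ρ, 0 ≤ ρ → SubsetT (ρ • C) K → ρ ≤ a) :
    inrad K C ≤ a :=
  Real.sSup_le (fun ρ ⟨hρ, t, ht⟩ ↦ h ρ hρ ⟨-t, vadd_set_subset_iff_subset_neg_vadd_set.1 ht⟩) ha

lemma le_inrad (hK : IsBounded K) (hC : C.Nontrivial) (hρ : 0 ≤ ρ) (h : SubsetT (ρ • C) K) :
    ρ ≤ inrad K C := by
  obtain ⟨t, ht⟩ := h
  obtain ⟨u, hu, v, hv, huv⟩ := hC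
  refine le_csSup ⟨Metric.diam K / dist u v, ?_⟩
    ⟨hρ, -t, vadd_set_subset_iff_subset_neg_vadd_set.2 (by rwa [neg_neg])⟩
  rintro σ ⟨hσ, s, hs⟩
  have := Metric.dist_le_diam_of_mem hK (hs (vadd_mem_vadd_set (smul_mem_smul_set hu)))
    (hs (vadd_mem_vadd_set (smul_mem_smul_set hv)))
  rw [dist_vadd_cancel_left, dist_smul₀, Real.norm_of_nonneg hσ] at this
  rwa [le_div_iff₀ (dist_pos.2 huv)]

lemma inrad_pos (hK : IsBody K) (hC : IsBounded C) (hCnt : C.Nontrivial) : 0 < inrad K C := by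
  obtain ⟨ρ, hρ, h⟩ := exists_subsetT_smul hC hK.2.2
  have := h.smul ρ⁻¹
  rw [smul_smul, inv_mul_cancel₀ hρ.ne', one_smul] at this
  exact (inv_pos.2 hρ).trans_le (le_inrad hK.isBounded hCnt (inv_nonneg.2 hρ.le) this)

lemma inrad_eq_zero_of_subsingleton (hC : C.Subsingleton) (hK : K.Nonempty) : inrad K C = 0 := by
  refine Real.sSup_of_not_bddAbove fun hbdd ↦ not_bddAbove_Ici (0 : ℝ) (hbdd.mono fun ρ hρ ↦ ?_)
  refine ⟨hρ, ?_⟩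
  obtain ⟨k, hk⟩ := hK
  rcases C.eq_empty_or_nonempty with rfl | ⟨c, hc⟩
  · exact ⟨0, by simp⟩
  · refine ⟨k - ρ • c, ?_⟩
    rw [hC.eq_singleton_of_mem hc, smul_set_singleton, vadd_set_singleton, vadd_eq_add,
      sub_add_cancel, singleton_subset_iff]
    exact hk

lemma inrad_le_inrad_mul_circR (hK : IsBounded K) (hC : IsBounded C) (hCnt : C.Nontrivial)
    (hB : IsBody B) : inrad K B ≤ inrad K C * circR C B := by
  refine inrad_le (mul_nonneg inrad_nonneg (circR_nonneg _ _)) fun ρ hρ hρK ↦ ?_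
  refine le_of_forall_gt_of_continuousWithinAt (f := (inrad K C * ·)) (by fun_prop) fun σ hσ ↦ ?_
  have hσ0 := (circR_nonneg C B).trans_lt hσ
  have hCB := (subsetT_smul_of_circR_lt hC hB hσ).smul (ρ / σ)
  rw [smul_smul, div_mul_cancel₀ _ hσ0.ne'] at hCB
  have := le_inrad hK hCnt (by positivity) (hCB.trans hρK)
  calc ρ = ρ / σ * σ := by field_simp
    _ ≤ inrad K C * σ := by gcongr

end Radii

section Diameter

variable {C K S : Set (Fin n → ℝ)}

lemma circR_segment (hC : Convex ℝ C) (x y : Fin n → ℝ) :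
    circR (segment ℝ x y) C = gauge (C - C) (x - y) := by
  unfold circR gauge
  congr 1
  ext ρ
  refine and_congr_right fun _ ↦ ⟨?_, ?_⟩
  · rintro ⟨t, ht⟩
    obtain ⟨_, ⟨a, ha, rfl⟩, hx⟩ := ht (left_mem_segment ℝ x y)
    obtain ⟨_, ⟨b, hb, rfl⟩, hy⟩ := ht (right_mem_segment ℝ x y)
    refine ⟨a - b, sub_mem_sub ha hb, ?_⟩
    dsimp only at hx hy ⊢
    rw [← hx, ← hy, vadd_eq_add, vadd_eq_add, smul_sub]
    abel
  · rintro ⟨_, ⟨a, ha, b, hb, rfl⟩, hab⟩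
    refine ⟨x - ρ • a, ((hC.smul ρ).vadd _).segment_subset ⟨ρ • a, smul_mem_smul_set ha, ?_⟩
      ⟨ρ • b, smul_mem_smul_set hb, ?_⟩⟩
    · exact sub_add_cancel x (ρ • a)
    · dsimp only at hab ⊢
      rw [vadd_eq_add, ← sub_sub_cancel x y, ← hab, smul_sub]
      abel

lemma two_mul_gauge_le_diamC (hK : IsBounded K) (hC : IsBody C) {x y : Fin n → ℝ} (hx : x ∈ K)
    (hy : y ∈ K) : 2 * gauge (C - C) (x - y) ≤ diamC K C := by
  obtain ⟨r, hr, hrK⟩ :=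
    ((NormedSpace.isVonNBounded_iff ℝ).2 (hK.sub hK) hC.sub_self_mem_nhds_zero).exists_pos
  refine le_csSup ⟨2 * r, ?_⟩ ⟨x, hx, y, hy, by rw [circR_segment hC.1]⟩
  rintro _ ⟨u, hu, v, hv, rfl⟩
  rw [circR_segment hC.1]
  gcongr
  exact gauge_le_of_mem hr.le (hrK r (Real.norm_of_nonneg hr.le).ge (sub_mem_sub hu hv))

lemma diamC_nonneg : 0 ≤ diamC K C :=
  Real.sSup_nonneg (by rintro _ ⟨x, _, y, _, rfl⟩; exact mul_nonneg zero_le_two (circR_nonneg _ _))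

lemma diamC_le (hC : Convex ℝ C) {d : ℝ} (hd : 0 ≤ d)
    (h : ∀ x ∈ K, ∀ y ∈ K, 2 * gauge (C - C) (x - y) ≤ d) : diamC K C ≤ d :=
  Real.sSup_le (by rintro _ ⟨x, hx, y, hy, rfl⟩; rw [circR_segment hC]; exact h x hx y hy) hd

lemma diamC_convexHull_le (hS : IsBounded S) (hC : IsBody C) :
    diamC (convexHull ℝ S) C ≤ diamC S C := by
  have hB := hC.sub_self_mem_nhds_zero
  have hconv : Convex ℝ {v | gauge (C - C) v ≤ diamC S C / 2} :=
    (hC.1.sub hC.1).setOfPred_gauge_le (mem_of_mem_nhds hB) (absorbent_nhds_zero hB) _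
  refine diamC_le hC.1 diamC_nonneg fun x hx y hy ↦ ?_
  have hxy : x - y ∈ convexHull ℝ (S - S) := by
    rw [convexHull_sub]
    exact sub_mem_sub hx hy
  have : gauge (C - C) (x - y) ≤ diamC S C / 2 := convexHull_min (by
    rintro _ ⟨a, ha, b, hb, rfl⟩
    have := two_mul_gauge_le_diamC hS hC ha hb
    show gauge (C - C) (a - b) ≤ _
    linarith) hconv hxy
  linarith

lemma circR_sub_self_le_half_diamC (hK : IsBounded K) (hC : IsBody C) :
    circR (K - K) (C - C) ≤ diamC K C / 2 := by
  refine le_of_forall_gt_imp_ge_of_dense fun ρ hρ ↦ ?_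
  have hρ0 : 0 < ρ := by linarith [diamC_nonneg (K := K) (C := C)]
  refine circR_le hρ0 (SubsetT.of_subset ?_)
  rintro _ ⟨x, hx, y, hy, rfl⟩
  have hB := hC.sub hC
  refine mem_smul_of_gauge_le hB.1 hB.2.1.isClosed hC.sub_self_mem_nhds_zero hρ0 ?_
  linarith [two_mul_gauge_le_diamC hK hC hx hy]

lemma Convex.isCompact_convexHull_insert (hK : Convex ℝ K) (hKc : IsCompact K) (hne : K.Nonempty)
    (p : Fin n → ℝ) : IsCompact (convexHull ℝ (insert p K)) := by
  have : convexHull ℝ (insert p K) =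
      (fun q : ℝ × (Fin n → ℝ) ↦ AffineMap.lineMap p q.2 q.1) '' (Icc 0 1 ×ˢ K) := by
    rw [convexHull_insert hne, hK.convexHull_eq, convexJoin_singleton_left]
    ext z
    simp only [mem_iUnion, segment_eq_image_lineMap, mem_image, mem_prod, Prod.exists, exists_prop]
    exact ⟨fun ⟨y, hy, θ, hθ, h⟩ ↦ ⟨θ, y, ⟨hθ, hy⟩, h⟩, fun ⟨θ, y, ⟨hθ, hy⟩, h⟩ ↦ ⟨y, hy, θ, hθ, h⟩⟩
  rw [this]
  exact (isCompact_Icc.prod hKc).image (by fun_prop)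

end Diameter

namespace IsDiamComplete

variable {C K : Set (Fin n → ℝ)}

lemma mem_of_forall_two_mul_gauge_le (hcomp : IsDiamComplete K C) (hK : IsBody K) (hC : IsBody C)
    {p : Fin n → ℝ} (hp : ∀ z ∈ K, 2 * gauge (C - C) (p - z) ≤ diamC K C) : p ∈ K := by
  by_contra hpK
  set K' := convexHull ℝ (insert p K)
  have hKK' : K ⊆ K' := (subset_insert p K).trans (subset_convexHull ℝ _)
  have hK' : IsBody K' := ⟨convex_convexHull ℝ _,
    hK.1.isCompact_convexHull_insert hK.2.1 hK.nonempty p, hK.2.2.mono (interior_mono hKK')⟩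
  have hss : K ⊂ K' :=
    (ssubset_iff_of_subset hKK').2 ⟨p, subset_convexHull ℝ _ (mem_insert p K), hpK⟩
  have hins : diamC (insert p K) C ≤ diamC K C := diamC_le hC.1 diamC_nonneg <| by
    rintro x (rfl | hx) y (rfl | hy)
    · simpa using diamC_nonneg
    · exact hp y hy
    · rw [← gauge_neg (fun _ ↦ neg_mem_sub_self), neg_sub]
      exact hp x hx
    · exact two_mul_gauge_le_diamC hK.isBounded hC hx hy
  exact (hcomp K' hK' hss).not_ge
    ((diamC_convexHull_le (hK.isBounded.insert p) hC).trans hins)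

lemma half_diamC_le (hcomp : IsDiamComplete K C) (hK : IsBody K) (hC : IsBody C)
    (hCnt : C.Nontrivial) : diamC K C / 2 ≤ circR K (C - C) + inrad K (C - C) := by
  set D := diamC K C
  have hB := hC.sub hC
  have hB0 := hC.sub_self_mem_nhds_zero
  refine le_of_forall_gt_of_continuousWithinAt (f := (· + inrad K (C - C))) (by fun_prop)
    fun ρ hρ ↦ ?_
  have hρ0 := (circR_nonneg _ _).trans_lt hρ
  obtain ⟨c, hc⟩ := subsetT_smul_of_circR_lt hK.isBounded hB hρ
  rcases le_or_gt (D / 2) ρ with hle | hlt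
  · linarith [inrad_nonneg (K := K) (C := C - C)]
  suffices D / 2 - ρ ≤ inrad K (C - C) by linarith
  refine le_inrad hK.isBounded hCnt.sub_self (by linarith) ⟨-c, ?_⟩
  rintro _ ⟨b, hb, rfl⟩
  rw [mem_vadd_set_iff_neg_vadd_mem, neg_neg, vadd_eq_add]
  -- triangle inequality for the gauge, through the centre `c`
  refine hcomp.mem_of_forall_two_mul_gauge_le hK hC fun z hz ↦ ?_
  obtain ⟨_, ⟨b', hb', rfl⟩, rfl⟩ := hc hz
  have hsplit : c + (D / 2 - ρ) • b - (c +ᵥ ρ • b') = (D / 2 - ρ) • b + ρ • -b' := by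
    rw [vadd_eq_add, smul_neg]
    abel
  have hg := gauge_add_le hB.1 (absorbent_nhds_zero hB0) ((D / 2 - ρ) • b) (ρ • -b')
  rw [gauge_smul_of_nonneg (by linarith), gauge_smul_of_nonneg hρ0.le, smul_eq_mul,
    smul_eq_mul] at hg
  have hb1 := gauge_le_one_of_mem hb
  have hb1' := gauge_le_one_of_mem (neg_mem_sub_self hb')
  rw [hsplit]
  nlinarith

lemma circR_le_asym_mul_inrad (hcomp : IsDiamComplete K C) (hK : IsBody K) (hC : IsBody C)
    (hCnt : C.Nontrivial) : circR K (C - C) ≤ asym K * inrad K (C - C) := by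
  set R := circR K (C - C)
  set r := inrad K (C - C)
  set s := asym K
  have hs : 0 ≤ s := circR_nonneg _ _
  have hRK := circR_le_mul_circR hK.isBounded (hK.sub hK) (hC.sub hC)
  have hKK := circR_le_sub_self hK
  have hD := (circR_sub_self_le_half_diamC hK.isBounded hC).trans (hcomp.half_diamC_le hK hC hCnt)
  have : R ≤ s / (1 + s) * (R + r) :=
    hRK.trans (mul_le_mul hKK hD (circR_nonneg _ _) (by positivity))
  rw [div_mul_eq_mul_div, le_div_iff₀ (by positivity)] at this
  nlinarith

end IsDiamComplete

theorem stmt10 {n : ℕ} (K C : Set (Fin n → ℝ)) (hK : IsBody K) (hC : IsBody C)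
    (hcomp : IsDiamComplete K C) :
    circR K C / inrad K C ≤ asym K * asym C := by
  have hsK : 0 ≤ asym K := circR_nonneg _ _
  have hsC : 0 ≤ asym C := circR_nonneg _ _
  obtain hCs | hCnt := C.subsingleton_or_nontrivial
  · rw [inrad_eq_zero_of_subsingleton hCs hK.nonempty, div_zero]
    exact mul_nonneg hsK hsC
  have hB := hC.sub hC
  have hR : circR K C ≤ circR K (C - C) * (1 + asym C) :=
    (circR_le_mul_circR hK.isBounded hB hC).trans
      (mul_le_mul_of_nonneg_left (circR_sub_self_le hC) (circR_nonneg _ _))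
  have hr : inrad K (C - C) ≤ inrad K C * (asym C / (1 + asym C)) :=
    (inrad_le_inrad_mul_circR hK.isBounded hC.isBounded hCnt hB).trans
      (mul_le_mul_of_nonneg_left (circR_le_sub_self hC) inrad_nonneg)
  rw [div_le_iff₀ (inrad_pos hK hC.isBounded hCnt)]
  calc circR K C ≤ circR K (C - C) * (1 + asym C) := hR
    _ ≤ asym K * inrad K (C - C) * (1 + asym C) := by
      gcongr
      exact hcomp.circR_le_asym_mul_inrad hK hC hCnt
    _ ≤ asym K * (inrad K C * (asym C / (1 + asym C))) * (1 + asym C) := by gcongr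
    _ = asym K * asym C * inrad K C := by field_simp
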